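/- arXiv:1908.02207 — 7 statements merged into one kernel-verified Lean document; each statement's English description precedes it below -/
import Mathlib

section
/- For every 0 < γ < (1/2)·ln(e/(e-1)), the inequality (1/2)·(1 - 2γ/(e·(1 - e^{-2γ})·Li₁(e^{-2γ}))) ≥ (1/2)·ln(e-1) holds, where Li₁(z) = -ln(1-z). -/
open Real in
lemma stmt_3_aux (s : ℝ) (hs0 : 0 ≤ s) (hs1 : s ≤ (Real.exp 1)⁻¹) :
    -Real.log (1 - s) ≤
      Real.exp 1 * Real.log (Real.exp 1 / (Real.exp 1 - 1)) * Real.negMulLog s := by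
  have he : (1:ℝ) < Real.exp 1 := by
    have := Real.exp_one_gt_d9; linarith
  have he0 : (0:ℝ) < Real.exp 1 := by linarith
  have heinv : (Real.exp 1)⁻¹ < 1 := by
    rw [inv_lt_one_iff₀]; right; exact he
  set T := Real.log (Real.exp 1 / (Real.exp 1 - 1)) with hTdef
  have hT : 0 < T := by
    apply Real.log_pos
    rw [lt_div_iff₀ (by linarith)]; linarith
  set f : ℝ → ℝ := fun x => Real.exp 1 * T * Real.negMulLog x + Real.log (1 - x) with hfdef
  have hbase : ConcaveOn ℝ (Set.Icc (0:ℝ) (Real.exp 1)⁻¹) Real.negMulLog :=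
    (Real.strictConcaveOn_negMulLog.concaveOn).subset Set.Icc_subset_Ici_self (convex_Icc _ _)
  have h1 : ConcaveOn ℝ (Set.Icc (0:ℝ) (Real.exp 1)⁻¹)
      (fun x => Real.exp 1 * T * Real.negMulLog x) := by
    have := hbase.smul (c := Real.exp 1 * T) (by positivity)
    simpa [smul_eq_mul] using this
  have h2 : ConcaveOn ℝ (Set.Icc (0:ℝ) (Real.exp 1)⁻¹) (fun x => Real.log (1 - x)) := by
    refine ⟨convex_Icc _ _, fun x hx y hy a b ha hb hab => ?_⟩
    have hx1 : (1:ℝ) - x ∈ Set.Ioi (0:ℝ) := by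
      simp only [Set.mem_Ioi]; have := hx.2; linarith
    have hy1 : (1:ℝ) - y ∈ Set.Ioi (0:ℝ) := by
      simp only [Set.mem_Ioi]; have := hy.2; linarith
    have := (strictConcaveOn_log_Ioi.concaveOn).2 hx1 hy1 ha hb hab
    have heq : a • (1 - x) + b • (1 - y) = 1 - (a • x + b • y) := by
      simp only [smul_eq_mul]; nlinarith
    rw [heq] at this
    simpa using this
  have hf : ConcaveOn ℝ (Set.Icc (0:ℝ) (Real.exp 1)⁻¹) f := h1.add h2
  have hmem : s ∈ segment ℝ (0:ℝ) (Real.exp 1)⁻¹ := by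
    rw [segment_eq_Icc (by positivity)]; exact ⟨hs0, hs1⟩
  have hkey := hf.ge_on_segment (x := 0) (y := (Real.exp 1)⁻¹)
    ⟨le_refl _, by positivity⟩ ⟨by positivity, le_refl _⟩ hmem
  have hf0 : f 0 = 0 := by simp [hfdef]
  have hfe : f (Real.exp 1)⁻¹ = 0 := by
    have hlog : Real.log (1 - (Real.exp 1)⁻¹) = Real.log (Real.exp 1 - 1) - 1 := by
      have : 1 - (Real.exp 1)⁻¹ = (Real.exp 1 - 1) / Real.exp 1 := by
        field_simp
      rw [this, Real.log_div (by linarith) (by positivity), Real.log_exp]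
    have hT' : T = 1 - Real.log (Real.exp 1 - 1) := by
      rw [hTdef, Real.log_div (by positivity) (by linarith), Real.log_exp]
    simp only [hfdef, Real.negMulLog_def, Real.log_inv, Real.log_exp, hlog, hT']
    field_simp
    ring
  rw [hf0, hfe, min_self] at hkey
  have : 0 ≤ Real.exp 1 * T * Real.negMulLog s + Real.log (1 - s) := hkey
  linarith

/-- For `0 < γ < (1/2)·ln(e/(e-1))`,
`(1/2)·(1 - 2γ/(e·(1-e^{-2γ})·Li₁(e^{-2γ}))) ≥ (1/2)·ln(e-1)`,
where `Li₁(z) = -ln(1-z)`. -/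
theorem stmt_3 (γ : ℝ) (h0 : 0 < γ)
    (h1 : γ < (1/2) * Real.log (Real.exp 1 / (Real.exp 1 - 1))) :
    (1/2) * Real.log (Real.exp 1 - 1) ≤
      (1/2) * (1 - 2*γ /
        (Real.exp 1 * (1 - Real.exp (-2*γ)) * (-Real.log (1 - Real.exp (-2*γ))))) := by
  have he : (1:ℝ) < Real.exp 1 := by
    have := Real.exp_one_gt_d9; linarith
  have he0 : (0:ℝ) < Real.exp 1 := by linarith
  set T := Real.log (Real.exp 1 / (Real.exp 1 - 1)) with hTdef
  set s : ℝ := 1 - Real.exp (-2*γ) with hsdef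
  have hs0 : 0 < s := by
    have : Real.exp (-2*γ) < 1 := Real.exp_lt_one_iff.mpr (by linarith)
    simp only [hsdef]; linarith
  have hs1 : s < (Real.exp 1)⁻¹ := by
    have h2γ : -T < -2*γ := by linarith
    have := Real.exp_lt_exp.mpr h2γ
    have hexpT : Real.exp (-T) = 1 - (Real.exp 1)⁻¹ := by
      rw [hTdef, Real.exp_neg, Real.exp_log (by rw [lt_div_iff₀ (by linarith)]; linarith)]
      field_simp
    rw [hexpT] at this
    simp only [hsdef]
    linarith
  have hlogs : Real.log s < 0 := Real.log_neg hs0 (by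
    have : (Real.exp 1)⁻¹ < 1 := by rw [inv_lt_one_iff₀]; right; exact he
    linarith)
  have hgam : 2*γ = -Real.log (1 - s) := by
    simp only [hsdef, sub_sub_cancel, Real.log_exp]; ring
  have haux := stmt_3_aux s (le_of_lt hs0) (le_of_lt hs1)
  have hT' : T = 1 - Real.log (Real.exp 1 - 1) := by
    rw [hTdef, Real.log_div (by positivity) (by linarith), Real.log_exp]
  have hden : 0 < Real.exp 1 * s * (-Real.log s) := by
    apply mul_pos (mul_pos he0 hs0); linarith
  have hdiv : 2*γ / (Real.exp 1 * s * (-Real.log s)) ≤ T := by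
    rw [div_le_iff₀ hden, hgam]
    calc -Real.log (1 - s) ≤ Real.exp 1 * T * Real.negMulLog s := haux
      _ = T * (Real.exp 1 * s * -Real.log s) := by
          simp only [Real.negMulLog_def]; ring
  rw [hT'] at hdiv
  have : 2*γ / (Real.exp 1 * (1 - Real.exp (-2*γ)) * (-Real.log (1 - Real.exp (-2*γ))))
      = 2*γ / (Real.exp 1 * s * (-Real.log s)) := by rw [hsdef]
  rw [this]
  linarith
end

section
/- Let E > 0 and for N ≥ max(E,2) let |ψ(N)⟩ = √(1 - E/N)|1⟩ + √(E/N)|N⟩. The normalized ideal photon-subtracted state ρ̃₋(N) = a|ψ(N)⟩⟨ψ(N)|a†/⟨ψ(N)|a†a|ψ(N)⟩, viewed as a 2×2 matrix in the basis {|0⟩, |N-1⟩}, converges as N → ∞ to (1/(E+1))·[[1, √E],[√E, E]]. -/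
open Filter Matrix

/-- The ideal photon-subtracted state of `|ψ(N)⟩ = √(1-E/N)|1⟩ + √(E/N)|N⟩`, written
as a `2×2` matrix in the basis `{|0⟩, |N-1⟩}`, converges as `N → ∞` to
`(1/(E+1))·[[1, √E],[√E, E]]`. -/
theorem stmt_6 (E : ℝ) (hE : 0 < E) :
    Tendsto (fun N : ℕ => (1/(1 - E/N + E)) •
        !![1 - E/N, Real.sqrt E * Real.sqrt (1 - E/N);
           Real.sqrt E * Real.sqrt (1 - E/N), E])
      atTop (nhds ((1/(E+1)) • !![1, Real.sqrt E; Real.sqrt E, E])) := by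
  have h0 : Tendsto (fun N : ℕ => E / (N : ℝ)) atTop (nhds 0) :=
    tendsto_const_div_atTop_nhds_zero_nat E
  have h1 : Tendsto (fun N : ℕ => 1 - E / (N : ℝ)) atTop (nhds 1) := by
    simpa using tendsto_const_nhds.sub h0
  have hs : Tendsto (fun N : ℕ => Real.sqrt (1 - E / (N : ℝ))) atTop (nhds 1) := by
    have := (Real.continuous_sqrt.tendsto 1).comp h1
    simpa [Function.comp_def] using this
  have hc : Tendsto (fun N : ℕ => 1 / (1 - E / (N : ℝ) + E)) atTop (nhds (1 / (E + 1))) := by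
    have h2 : Tendsto (fun N : ℕ => 1 - E / (N : ℝ) + E) atTop (nhds (1 + E)) := by
      simpa using h1.add (tendsto_const_nhds (x := E))
    have h3 := h2.inv₀ (by positivity)
    simpa [one_div, add_comm] using h3
  have hM : Tendsto (fun N : ℕ => !![1 - E / (N : ℝ), Real.sqrt E * Real.sqrt (1 - E / N);
        Real.sqrt E * Real.sqrt (1 - E / N), E]) atTop
      (nhds !![1, Real.sqrt E; Real.sqrt E, E]) := by
    apply tendsto_pi_nhds.mpr
    intro i
    rw [tendsto_pi_nhds]
    intro j
    fin_cases i <;> fin_cases j <;> simp <;>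
      first
        | exact h1
        | simpa using (tendsto_const_nhds (x := Real.sqrt E)).mul hs
  exact hc.smul hM
end

section
/- For any γ > 0 and E > 0 there exists a pure state ρ on ℓ²(ℕ) with tr[ρ H] ≤ E + 1 (H = a†a) such that the trace distance ‖ρ̃₋ − N₋(γ)[ρ]/tr[N₋(γ)[ρ]]‖₁ ≥ √(E/(E+1)), where ρ̃₋ = aρa†/tr[aρa†] and N₋(γ)[ρ] = (e^{2γ}-1)·a e^{-γa†a} ρ e^{-γa†a} a†. -/
open scoped InnerProductSpace

/-- Trace norm of an operator, via the characterization
`‖T‖₁ = sup { ∑ᵢ |⟨fᵢ, T eᵢ⟩| : (eᵢ), (fᵢ) finite orthonormal families }`. -/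
noncomputable def traceNorm {H : Type*} [NormedAddCommGroup H] [InnerProductSpace ℂ H]
    (T : H →L[ℂ] H) : ℝ :=
  ⨆ (n : ℕ) (e : Fin n → H) (f : Fin n → H) (_ : Orthonormal ℂ e)
    (_ : Orthonormal ℂ f), ∑ i, ‖⟪f i, T (e i)⟫_ℂ‖

/-- Rank-one operator `|v⟩⟨v|`. -/
noncomputable def rankOne {H : Type*} [NormedAddCommGroup H] [InnerProductSpace ℂ H]
    (v : H) : H →L[ℂ] H :=
  (innerSL ℂ v).smulRight v

namespace Stmt9

section Aux
variable {H : Type*} [NormedAddCommGroup H] [InnerProductSpace ℂ H]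

lemma bessel_prod {x : H} (hx : ‖x‖ = 1) {n : ℕ} (e f : Fin n → H)
    (he : Orthonormal ℂ e) (hf : Orthonormal ℂ f) :
    ∑ i, ‖⟪x, e i⟫_ℂ‖ * ‖⟪f i, x⟫_ℂ‖ ≤ 1 := by
  have h1 : ∑ i, ‖⟪x, e i⟫_ℂ‖ ^ 2 ≤ 1 := by
    have := he.sum_inner_products_le (s := Finset.univ) x
    simpa [hx, norm_inner_symm] using this
  have h2 : ∑ i, ‖⟪f i, x⟫_ℂ‖ ^ 2 ≤ 1 := by
    have := hf.sum_inner_products_le (s := Finset.univ) x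
    simpa [hx] using this
  have hcs := Finset.sum_mul_sq_le_sq_mul_sq Finset.univ
    (fun i => ‖⟪x, e i⟫_ℂ‖) (fun i => ‖⟪f i, x⟫_ℂ‖)
  have hnn : (0:ℝ) ≤ ∑ i, ‖⟪x, e i⟫_ℂ‖ * ‖⟪f i, x⟫_ℂ‖ :=
    Finset.sum_nonneg fun i _ => mul_nonneg (norm_nonneg _) (norm_nonneg _)
  nlinarith [mul_le_one₀ h1 (Finset.sum_nonneg fun i (_ : i ∈ Finset.univ) =>
    sq_nonneg ‖⟪f i, x⟫_ℂ‖) h2]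

lemma sum_le_two {φ χ : H} (hφ : ‖φ‖ = 1) (hχ : ‖χ‖ = 1) {n : ℕ} (e f : Fin n → H)
    (he : Orthonormal ℂ e) (hf : Orthonormal ℂ f) :
    ∑ i, ‖⟪f i, (rankOne φ - rankOne χ) (e i)⟫_ℂ‖ ≤ 2 := by
  have hterm : ∀ i, ‖⟪f i, (rankOne φ - rankOne χ) (e i)⟫_ℂ‖ ≤
      ‖⟪φ, e i⟫_ℂ‖ * ‖⟪f i, φ⟫_ℂ‖ + ‖⟪χ, e i⟫_ℂ‖ * ‖⟪f i, χ⟫_ℂ‖ := by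
    intro i
    have : (rankOne φ - rankOne χ) (e i) = ⟪φ, e i⟫_ℂ • φ - ⟪χ, e i⟫_ℂ • χ := rfl
    rw [this, inner_sub_right, inner_smul_right, inner_smul_right]
    calc ‖⟪φ, e i⟫_ℂ * ⟪f i, φ⟫_ℂ - ⟪χ, e i⟫_ℂ * ⟪f i, χ⟫_ℂ‖
        ≤ ‖⟪φ, e i⟫_ℂ * ⟪f i, φ⟫_ℂ‖ + ‖⟪χ, e i⟫_ℂ * ⟪f i, χ⟫_ℂ‖ := norm_sub_le _ _
      _ = _ := by rw [norm_mul, norm_mul]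
  calc ∑ i, ‖⟪f i, (rankOne φ - rankOne χ) (e i)⟫_ℂ‖
      ≤ ∑ i, (‖⟪φ, e i⟫_ℂ‖ * ‖⟪f i, φ⟫_ℂ‖ + ‖⟪χ, e i⟫_ℂ‖ * ‖⟪f i, χ⟫_ℂ‖) :=
        Finset.sum_le_sum fun i _ => hterm i
    _ = (∑ i, ‖⟪φ, e i⟫_ℂ‖ * ‖⟪f i, φ⟫_ℂ‖) + ∑ i, ‖⟪χ, e i⟫_ℂ‖ * ‖⟪f i, χ⟫_ℂ‖ :=
        Finset.sum_add_distrib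
    _ ≤ 1 + 1 := add_le_add (bessel_prod hφ e f he hf) (bessel_prod hχ e f he hf)
    _ = 2 := by norm_num

lemma le_traceNorm_of_bound (T : H →L[ℂ] H) (M : ℝ)
    (hM : ∀ (n : ℕ) (e f : Fin n → H), Orthonormal ℂ e → Orthonormal ℂ f →
      ∑ i, ‖⟪f i, T (e i)⟫_ℂ‖ ≤ M)
    {n : ℕ} (e f : Fin n → H) (he : Orthonormal ℂ e) (hf : Orthonormal ℂ f) :
    ∑ i, ‖⟪f i, T (e i)⟫_ℂ‖ ≤ traceNorm T := by
  set b := max M 0 with hb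
  have hb0 : (0:ℝ) ≤ b := le_max_right _ _
  have hbM : M ≤ b := le_max_left _ _
  have hk : ∀ (n : ℕ) (e f : Fin n → H),
      (⨆ (_ : Orthonormal ℂ e) (_ : Orthonormal ℂ f), ∑ i, ‖⟪f i, T (e i)⟫_ℂ‖) ≤ b := by
    intro n e f
    exact Real.iSup_le (fun he => Real.iSup_le (fun hf => (hM n e f he hf).trans hbM) hb0) hb0
  have hh : ∀ (n : ℕ) (e : Fin n → H),
      (⨆ (f : Fin n → H) (_ : Orthonormal ℂ e) (_ : Orthonormal ℂ f),
        ∑ i, ‖⟪f i, T (e i)⟫_ℂ‖) ≤ b :=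
    fun n e => Real.iSup_le (fun f => hk n e f) hb0
  have hg : ∀ (n : ℕ),
      (⨆ (e : Fin n → H) (f : Fin n → H) (_ : Orthonormal ℂ e) (_ : Orthonormal ℂ f),
        ∑ i, ‖⟪f i, T (e i)⟫_ℂ‖) ≤ b :=
    fun n => Real.iSup_le (fun e => hh n e) hb0
  have step1 : ∑ i, ‖⟪f i, T (e i)⟫_ℂ‖
      ≤ ⨆ (f : Fin n → H) (_ : Orthonormal ℂ e) (_ : Orthonormal ℂ f),
          ∑ i, ‖⟪f i, T (e i)⟫_ℂ‖ := by
    have : (⨆ (_ : Orthonormal ℂ e) (_ : Orthonormal ℂ f), ∑ i, ‖⟪f i, T (e i)⟫_ℂ‖)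
        = ∑ i, ‖⟪f i, T (e i)⟫_ℂ‖ := by rw [ciSup_pos he, ciSup_pos hf]
    rw [← this]
    exact le_ciSup ⟨b, by rintro _ ⟨f, rfl⟩; exact hk n e f⟩ f
  have step2 : (⨆ (f : Fin n → H) (_ : Orthonormal ℂ e) (_ : Orthonormal ℂ f),
      ∑ i, ‖⟪f i, T (e i)⟫_ℂ‖)
      ≤ ⨆ (e : Fin n → H) (f : Fin n → H) (_ : Orthonormal ℂ e) (_ : Orthonormal ℂ f),
          ∑ i, ‖⟪f i, T (e i)⟫_ℂ‖ :=
    le_ciSup ⟨b, by rintro _ ⟨e, rfl⟩; exact hh n e⟩ e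
  have step3 : (⨆ (e : Fin n → H) (f : Fin n → H) (_ : Orthonormal ℂ e) (_ : Orthonormal ℂ f),
      ∑ i, ‖⟪f i, T (e i)⟫_ℂ‖) ≤ traceNorm T :=
    le_ciSup (f := fun n => ⨆ (e : Fin n → H) (f : Fin n → H) (_ : Orthonormal ℂ e)
      (_ : Orthonormal ℂ f), ∑ i, ‖⟪f i, T (e i)⟫_ℂ‖) ⟨b, by rintro _ ⟨n, rfl⟩; exact hg n⟩ n
  exact step1.trans (step2.trans step3)

lemma exists_eigvec {φ χ : H} (hφ : ‖φ‖ = 1) (hχ : ‖χ‖ = 1) {s t : ℝ}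
    (hs : ⟪χ, φ⟫_ℂ = (s : ℂ)) (hst : s ^ 2 + t ^ 2 = 1) (ht : 0 < t) :
    ∃ u : H, ‖u‖ = 1 ∧ ⟪u, (rankOne φ - rankOne χ) u⟫_ℂ = (t : ℂ) := by
  have hstC : (s : ℂ) ^ 2 + (t : ℂ) ^ 2 = 1 := by exact_mod_cast congrArg (Complex.ofReal) hst
  have h11 : ⟪φ, φ⟫_ℂ = 1 := by rw [inner_self_eq_norm_sq_to_K, hφ]; norm_num
  have h22 : ⟪χ, χ⟫_ℂ = 1 := by rw [inner_self_eq_norm_sq_to_K, hχ]; norm_num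
  have h12 : ⟪φ, χ⟫_ℂ = (s : ℂ) := by
    rw [← inner_conj_symm, hs, Complex.conj_ofReal]
  set k : ℝ := t * Real.sqrt (2 * (1 + t)) with hkdef
  have h2t : (0:ℝ) < 2 * (1 + t) := by nlinarith
  have hk : 0 < k := mul_pos ht (Real.sqrt_pos.mpr h2t)
  have hk2 : k ^ 2 = 2 * (1 + t) * t ^ 2 := by
    rw [hkdef, mul_pow, Real.sq_sqrt h2t.le]; ring
  set w : H := (((1 + t : ℝ) : ℂ)) • φ - ((s : ℝ) : ℂ) • χ with hwdef
  have hφw : ⟪φ, w⟫_ℂ = ((1 + t : ℝ) : ℂ) - (s : ℂ) ^ 2 := by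
    rw [hwdef, inner_sub_right, inner_smul_right, inner_smul_right, h11, h12]; push_cast; ring
  have hχw : ⟪χ, w⟫_ℂ = ((1 + t : ℝ) : ℂ) * (s : ℂ) - (s : ℂ) := by
    rw [hwdef, inner_sub_right, inner_smul_right, inner_smul_right, hs, h22]; push_cast; ring
  have hφw' : ⟪φ, w⟫_ℂ = ((t * (1 + t) : ℝ) : ℂ) := by
    rw [hφw]; push_cast; linear_combination -hstC
  have hχw' : ⟪χ, w⟫_ℂ = ((s * t : ℝ) : ℂ) := by rw [hχw]; push_cast; ring
  have hww : ⟪w, w⟫_ℂ = ((k ^ 2 : ℝ) : ℂ) := by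
    rw [hwdef, inner_sub_left, inner_smul_left, inner_smul_left, ← hwdef, hφw', hχw',
      Complex.conj_ofReal, Complex.conj_ofReal, hk2]
    push_cast
    linear_combination (-(t:ℂ)) * hstC
  have hnw : ‖w‖ = k := by
    have h1 := inner_self_eq_norm_sq (𝕜 := ℂ) (E := H) w
    rw [hww] at h1
    simp only [RCLike.re_to_complex, Complex.ofReal_re] at h1
    nlinarith [norm_nonneg w]
  have hkC : ((k : ℝ) : ℂ) ≠ 0 := by exact_mod_cast hk.ne'
  refine ⟨((k : ℂ))⁻¹ • w, ?_, ?_⟩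
  · rw [norm_smul, hnw, norm_inv, Complex.norm_real, Real.norm_eq_abs, abs_of_pos hk,
      inv_mul_cancel₀ hk.ne']
  · have hwφ : ⟪w, φ⟫_ℂ = ((t * (1 + t) : ℝ) : ℂ) := by
      rw [← inner_conj_symm, hφw', Complex.conj_ofReal]
    have hwχ : ⟪w, χ⟫_ℂ = ((s * t : ℝ) : ℂ) := by
      rw [← inner_conj_symm, hχw', Complex.conj_ofReal]
    have hTw : (rankOne φ - rankOne χ) w = ((t * (1 + t) : ℝ) : ℂ) • φ - ((s * t : ℝ) : ℂ) • χ := by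
      rw [show (rankOne φ - rankOne χ) w = ⟪φ, w⟫_ℂ • φ - ⟪χ, w⟫_ℂ • χ from rfl, hφw', hχw']
    have hwTw : ⟪w, (rankOne φ - rankOne χ) w⟫_ℂ = ((t : ℝ) : ℂ) * ((k : ℝ) : ℂ) ^ 2 := by
      rw [hTw, inner_sub_right, inner_smul_right, inner_smul_right, hwφ, hwχ]
      have hk2C : ((k : ℝ) : ℂ) ^ 2 = 2 * (1 + (t:ℂ)) * (t:ℂ) ^ 2 := by
        exact_mod_cast congrArg (Complex.ofReal) hk2
      push_cast
      linear_combination (-(t:ℂ)) * hk2C + (-(t:ℂ)^2) * hstC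
    rw [map_smul, inner_smul_left, inner_smul_right, hwTw, map_inv₀, Complex.conj_ofReal]
    field_simp

end Aux

noncomputable abbrev L2 := lp (fun _ : ℕ => ℂ) 2

lemma single_apply' (i j : ℕ) (z : ℂ) :
    (lp.single 2 i z : L2) j = if j = i then z else 0 := by
  rw [lp.single_apply]
  by_cases h : j = i
  · subst h; simp
  · simp [h]

lemma inner_single_single (i j : ℕ) :
    ⟪(lp.single 2 i (1:ℂ) : L2), lp.single 2 j 1⟫_ℂ = if i = j then 1 else 0 := by
  rw [lp.inner_single_left, single_apply']
  by_cases h : i = j <;> simp [h]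

lemma inner_comb {i j : ℕ} (hij : i ≠ j) (x y x' y' : ℝ) :
    ⟪(x : ℂ) • (lp.single 2 i (1:ℂ) : L2) + (y : ℂ) • lp.single 2 j 1,
      (x' : ℂ) • (lp.single 2 i (1:ℂ) : L2) + (y' : ℂ) • lp.single 2 j 1⟫_ℂ
      = ((x * x' + y * y' : ℝ) : ℂ) := by
  simp only [inner_add_left, inner_add_right, inner_smul_left, inner_smul_right,
    inner_single_single, Complex.conj_ofReal, if_pos rfl, if_neg hij, if_neg (Ne.symm hij)]
  push_cast
  ring

lemma norm_comb_one {i j : ℕ} (hij : i ≠ j) {x y : ℝ} (h : x ^ 2 + y ^ 2 = 1) :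
    ‖(x : ℂ) • (lp.single 2 i (1:ℂ) : L2) + (y : ℂ) • lp.single 2 j 1‖ = 1 := by
  set v : L2 := (x : ℂ) • (lp.single 2 i (1:ℂ) : L2) + (y : ℂ) • lp.single 2 j 1 with hv
  have h1 : ⟪v, v⟫_ℂ = ((x * x + y * y : ℝ) : ℂ) := inner_comb hij x y x y
  have h2 := inner_self_eq_norm_sq (𝕜 := ℂ) v
  rw [h1] at h2
  simp only [RCLike.re_to_complex, Complex.ofReal_re] at h2
  nlinarith [norm_nonneg v]

lemma comb_apply {i j : ℕ} (x y : ℝ) (n : ℕ) :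
    (((x : ℂ) • (lp.single 2 i (1:ℂ) : L2) + (y : ℂ) • lp.single 2 j 1 : L2) n)
      = (if n = i then (x : ℂ) else 0) + (if n = j then (y : ℂ) else 0) := by
  rw [lp.coeFn_add, lp.coeFn_smul, lp.coeFn_smul]
  simp only [Pi.add_apply, Pi.smul_apply, single_apply', smul_eq_mul]
  by_cases h1 : n = i <;> by_cases h2 : n = j <;> simp [h1, h2]

set_option maxHeartbeats 1000000 in
lemma key_ineq (γ E : ℝ) (hγ : 0 < γ) (hE : 0 < E) :
    ∃ N : ℕ, 2 ≤ N ∧ 2 * E ≤ (N : ℝ) ∧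
      (E + 1) * ((1 - E / N) + E * Real.exp (-γ * ((N : ℝ) - 1))) ^ 2
        ≤ ((1 - E / N) + E) * ((1 - E / N) + E * Real.exp (-γ * ((N : ℝ) - 1)) ^ 2) := by
  have hden : (0:ℝ) < 2 * (2 * (E + 1) + E ^ 2) := by nlinarith
  set K : ℝ := E / (2 * (2 * (E + 1) + E ^ 2)) with hKdef
  have hK : 0 < K := div_pos hE hden
  have hXK : (2 * (E + 1) + E ^ 2) * K = E / 2 := by
    rw [hKdef]; field_simp
  obtain ⟨n₀, hn₀⟩ := exists_nat_ge (max (2 * E) (16 / (K * γ ^ 2)))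
  refine ⟨n₀ + 2, by omega, ?_⟩
  have hNn : (n₀ : ℝ) ≤ ((n₀ + 2 : ℕ) : ℝ) := by push_cast; linarith
  set N : ℕ := n₀ + 2 with hNdef
  have hN2 : (2:ℝ) ≤ (N : ℝ) := by rw [hNdef]; push_cast; linarith
  have hNpos : (0:ℝ) < N := by linarith
  have h2E : 2 * E ≤ (N : ℝ) := le_trans (le_trans (le_max_left _ _) hn₀) hNn
  have h16 : 16 / (K * γ ^ 2) ≤ (N : ℝ) := le_trans (le_trans (le_max_right _ _) hn₀) hNn
  clear_value N
  clear hn₀ hNn hNdef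
  refine ⟨h2E, ?_⟩
  set a : ℝ := 1 - E / N with hadef
  clear_value a
  have hEN0 : 0 ≤ E / N := by positivity
  have ha1 : a ≤ 1 := by rw [hadef]; linarith
  have ha2 : 1 / 2 ≤ a := by
    rw [hadef]
    have : E / N ≤ 1 / 2 := by rw [div_le_iff₀ hNpos]; linarith
    linarith
  set y : ℝ := γ * ((N : ℝ) - 1) with hydef
  have hy : 0 < y := by rw [hydef]; apply mul_pos hγ; linarith
  clear_value y
  set q : ℝ := Real.exp (-y) with hqdef
  have hq0 : 0 < q := Real.exp_pos _
  have hq1 : q ≤ 1 := Real.exp_le_one_iff.mpr (by linarith)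
  have hKγN : 16 ≤ K * γ ^ 2 * N := by
    rw [div_le_iff₀ (by positivity)] at h16
    linarith
  have hexp : (N : ℝ) / K ≤ Real.exp y := by
    have e1 : y / 2 + 1 ≤ Real.exp (y / 2) := Real.add_one_le_exp _
    have e2 : Real.exp (y / 2) ^ 2 = Real.exp y := by
      rw [sq, ← Real.exp_add]; ring_nf
    have e3 : (y / 2) ^ 2 ≤ Real.exp y := by
      rw [← e2]
      nlinarith [Real.exp_pos (y/2)]
    have e4 : γ * ((N:ℝ)/2) / 2 ≤ y / 2 := by
      rw [hydef]
      nlinarith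
    have e6 : (N : ℝ) / K ≤ (γ * ((N:ℝ)/2) / 2) ^ 2 := by
      rw [div_le_iff₀ hK]
      nlinarith [mul_le_mul_of_nonneg_right hKγN hNpos.le]
    have h0 : 0 ≤ γ * ((N:ℝ)/2) / 2 := by positivity
    nlinarith
  have hqK : q ≤ K / N := by
    have h1 : q = 1 / Real.exp y := by rw [hqdef, Real.exp_neg, one_div]
    have h2 : 1 / Real.exp y ≤ 1 / ((N:ℝ)/K) :=
      one_div_le_one_div_of_le (by positivity) hexp
    have h3 : 1 / ((N:ℝ)/K) = K / N := one_div_div _ _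
    linarith
  have t5 : a ^ 2 - a = -(a * (E / N)) := by rw [hadef]; ring
  have t3 : (2 * (E + 1) + E ^ 2) * q ≤ (E / 2) / N := by
    calc (2 * (E + 1) + E ^ 2) * q ≤ (2 * (E + 1) + E ^ 2) * (K / N) := by
          apply mul_le_mul_of_nonneg_left hqK (by nlinarith)
      _ = ((2 * (E + 1) + E ^ 2) * K) / N := by ring
      _ = (E / 2) / N := by rw [hXK]
  have t4 : (E / 2) / N ≤ a * (E / N) := by
    have h : (E / 2) / N = (1/2) * (E / N) := by ring
    rw [h]
    apply mul_le_mul_of_nonneg_right (by linarith) hEN0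
  have u1 : 2 * a * (E + 1) * q ≤ 2 * (E + 1) * q := by
    nlinarith [mul_le_mul_of_nonneg_right ha1 (show (0:ℝ) ≤ 2*(E+1)*q by positivity)]
  have hqq : q * q ≤ q := by nlinarith [mul_le_mul_of_nonneg_left hq1 hq0.le]
  have u2 : E ^ 2 * q ^ 2 ≤ E ^ 2 * q := by
    nlinarith [mul_le_mul_of_nonneg_left hqq (sq_nonneg E)]
  have u3 : (0:ℝ) ≤ a * q ^ 2 := by positivity
  have hinner : a ^ 2 - a + 2 * a * (E + 1) * q + E ^ 2 * q ^ 2 - a * q ^ 2 ≤ 0 := by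
    linarith
  have hq' : Real.exp (-γ * ((N:ℝ) - 1)) = q := by rw [hqdef]; congr 1; rw [hydef]; ring
  rw [hq']
  nlinarith [mul_le_mul_of_nonneg_left hinner hE.le]

end Stmt9

open Stmt9 in
set_option maxHeartbeats 1000000 in
/-- For any `γ > 0` and `E > 0` there is a pure state `ψ ∈ ℓ²(ℕ)` of energy `≤ E+1`
such that the trace norm of the difference between the ideal photon-subtracted state
(the projection onto the normalization `φ` of `aψ`, with `φ_n ∝ √(n+1) ψ_{n+1}`) and
the normalized output of the approximate photon subtraction `N₋(γ)` (the projection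
onto the normalization `χ` of `a e^{-γa†a} ψ`, with `χ_n ∝ √(n+1) e^{-γ(n+1)} ψ_{n+1}`)
is at least `√(E/(E+1))`. -/
theorem stmt_9 (γ E : ℝ) (hγ : 0 < γ) (hE : 0 < E) :
    ∃ ψ φ χ : lp (fun _ : ℕ => ℂ) 2, ‖ψ‖ = 1 ∧
      (∑' n : ℕ, (n : ℝ) * ‖ψ n‖^2) ≤ E + 1 ∧
      ‖φ‖ = 1 ∧ ‖χ‖ = 1 ∧
      (∃ c : ℝ, 0 < c ∧ ∀ n : ℕ,
        φ n = ((c * Real.sqrt ((n : ℝ) + 1) : ℝ) : ℂ) * ψ (n + 1)) ∧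
      (∃ d : ℝ, 0 < d ∧ ∀ n : ℕ,
        χ n = ((d * Real.sqrt ((n : ℝ) + 1) * Real.exp (-γ*((n : ℝ)+1)) : ℝ) : ℂ) *
          ψ (n + 1)) ∧
      Real.sqrt (E/(E+1)) ≤ traceNorm (rankOne φ - rankOne χ) := by
  obtain ⟨N, hN2, h2E, key⟩ := key_ineq γ E hγ hE
  have hNR : (0:ℝ) < N := by
    have : (0:ℕ) < N := by omega
    exact_mod_cast this
  set q : ℝ := Real.exp (-γ * ((N:ℝ) - 1)) with hqdef
  set r1 : ℝ := Real.exp (-γ) with hr1def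
  set rN : ℝ := Real.exp (-γ * N) with hrNdef
  have hq0 : 0 < q := Real.exp_pos _
  have hr10 : 0 < r1 := Real.exp_pos _
  have hrN0 : 0 < rN := Real.exp_pos _
  have hrN : rN = r1 * q := by
    rw [hrNdef, hr1def, hqdef, ← Real.exp_add]; congr 1; ring
  set a : ℝ := 1 - E / N with hadef
  have hEN0 : 0 < E / N := by positivity
  have hEN12 : E / N ≤ 1 / 2 := by rw [div_le_iff₀ hNR]; linarith
  have ha0 : 0 ≤ a := by rw [hadef]; linarith
  have haE : 0 < a + E := by rw [hadef]; linarith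
  set α : ℝ := Real.sqrt a with hαdef
  set β : ℝ := Real.sqrt (E / N) with hβdef
  set sE : ℝ := Real.sqrt E with hsEdef
  have hα2 : α ^ 2 = a := Real.sq_sqrt ha0
  have hβ2 : β ^ 2 = E / N := Real.sq_sqrt hEN0.le
  have hsE2 : sE ^ 2 = E := Real.sq_sqrt hE.le
  have hα0 : 0 ≤ α := Real.sqrt_nonneg _
  have hβ0 : 0 ≤ β := Real.sqrt_nonneg _
  have hsE0 : 0 ≤ sE := Real.sqrt_nonneg _
  set P : ℝ := Real.sqrt (a + E) with hPdef
  have hP2 : P ^ 2 = a + E := Real.sq_sqrt haE.le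
  have hP0 : 0 < P := Real.sqrt_pos.mpr haE
  have hQ20 : 0 < r1 ^ 2 * a + E * rN ^ 2 := by positivity
  set Q : ℝ := Real.sqrt (r1 ^ 2 * a + E * rN ^ 2) with hQdef
  have hQ2 : Q ^ 2 = r1 ^ 2 * a + E * rN ^ 2 := Real.sq_sqrt hQ20.le
  have hQ0 : 0 < Q := Real.sqrt_pos.mpr hQ20
  set s : ℝ := (r1 * a + E * rN) / (Q * P) with hsdef
  have hs0 : 0 ≤ s := by
    apply div_nonneg _ (by positivity)
    have := mul_nonneg hr10.le ha0
    nlinarith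
  -- key inequality in terms of s
  have hkey2 : (E + 1) * s ^ 2 ≤ 1 := by
    have hnum : (r1 * a + E * rN) ^ 2 = r1 ^ 2 * ((a + E * q) ^ 2) := by
      rw [hrN]; ring
    have hden : (Q * P) ^ 2 = r1 ^ 2 * ((a + E * q ^ 2) * (a + E)) := by
      rw [mul_pow, hQ2, hP2, hrN]; ring
    have hs2eq : s ^ 2 = ((a + E * q) ^ 2) / ((a + E * q ^ 2) * (a + E)) := by
      rw [hsdef, div_pow, hnum, hden, mul_div_mul_left _ _ (by positivity : (r1:ℝ)^2 ≠ 0)]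
    have hdpos : 0 < (a + E * q ^ 2) * (a + E) := by positivity
    rw [hs2eq, ← mul_div_assoc, div_le_one hdpos, mul_comm (a + E * q ^ 2) (a + E)]
    exact key
  have hs2 : s ^ 2 ≤ 1 / (E + 1) := by
    rw [le_div_iff₀ (by linarith : (0:ℝ) < E + 1)]
    linarith
  have hs21 : s ^ 2 < 1 := by
    have : 1 / (E + 1) < 1 := by
      rw [div_lt_one (by linarith)]; linarith
    linarith
  set t : ℝ := Real.sqrt (1 - s ^ 2) with htdef
  have ht2 : t ^ 2 = 1 - s ^ 2 := Real.sq_sqrt (by linarith)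
  have ht0 : 0 < t := Real.sqrt_pos.mpr (by linarith)
  have hst : s ^ 2 + t ^ 2 = 1 := by rw [ht2]; ring
  have htarget : Real.sqrt (E / (E + 1)) ≤ t := by
    rw [htdef]
    apply Real.sqrt_le_sqrt
    have hEq : E / (E + 1) = 1 - 1 / (E + 1) := by field_simp; ring
    linarith
  -- the vectors
  set m : ℕ := N - 1 with hmdef
  have hm1 : m + 1 = N := by omega
  have h1N : (1:ℕ) ≠ N := by omega
  have h0m : (0:ℕ) ≠ m := by omega
  set ψ : L2 := (α : ℂ) • (lp.single 2 1 (1:ℂ) : L2) + (β : ℂ) • lp.single 2 N 1 with hψdef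
  set φv : L2 := ((α / P : ℝ) : ℂ) • (lp.single 2 0 (1:ℂ) : L2)
    + ((sE / P : ℝ) : ℂ) • lp.single 2 m 1 with hφdef
  set χv : L2 := ((r1 * α / Q : ℝ) : ℂ) • (lp.single 2 0 (1:ℂ) : L2)
    + ((sE * rN / Q : ℝ) : ℂ) • lp.single 2 m 1 with hχdef
  have hψapp : ∀ n : ℕ, ψ n = (if n = 1 then (α:ℂ) else 0) + (if n = N then (β:ℂ) else 0) :=
    fun n => comb_apply α β n
  have hφapp : ∀ n : ℕ, φv n = (if n = 0 then ((α/P:ℝ):ℂ) else 0)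
      + (if n = m then ((sE/P:ℝ):ℂ) else 0) := fun n => comb_apply _ _ n
  have hχapp : ∀ n : ℕ, χv n = (if n = 0 then ((r1*α/Q:ℝ):ℂ) else 0)
      + (if n = m then ((sE*rN/Q:ℝ):ℂ) else 0) := fun n => comb_apply _ _ n
  have hψnorm : ‖ψ‖ = 1 := norm_comb_one h1N (by rw [hα2, hβ2, hadef]; ring)
  have hφnorm : ‖φv‖ = 1 := by
    apply norm_comb_one h0m
    rw [div_pow, div_pow, hα2, hsE2, hP2]
    field_simp
  have hχnorm : ‖χv‖ = 1 := by
    apply norm_comb_one h0m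
    rw [div_pow, div_pow, mul_pow, mul_pow, hα2, hsE2, hQ2]
    field_simp
  -- √N * β = sE
  have hNβ : Real.sqrt (N : ℝ) * β = sE := by
    rw [hβdef, hsEdef, ← Real.sqrt_mul hNR.le]
    congr 1
    field_simp
  refine ⟨ψ, φv, χv, hψnorm, ?_, hφnorm, hχnorm, ?_, ?_, ?_⟩
  · -- energy bound
    have hsupp : ∀ n ∉ ({1, N} : Finset ℕ), (n:ℝ) * ‖ψ n‖^2 = 0 := by
      intro n hn
      simp only [Finset.mem_insert, Finset.mem_singleton, not_or] at hn
      rw [hψapp n, if_neg hn.1, if_neg hn.2]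
      simp
    rw [tsum_eq_sum hsupp, Finset.sum_pair h1N]
    have e1 : ψ 1 = (α : ℂ) := by rw [hψapp 1, if_pos rfl, if_neg h1N]; ring
    have eN : ψ N = (β : ℂ) := by rw [hψapp N, if_neg (Ne.symm h1N), if_pos rfl]; ring
    rw [e1, eN, Complex.norm_real, Complex.norm_real, Real.norm_eq_abs, Real.norm_eq_abs,
      abs_of_nonneg hα0, abs_of_nonneg hβ0, hα2, hβ2]
    have : (N:ℝ) * (E / N) = E := by field_simp
    rw [Nat.cast_one, this, one_mul, hadef]
    linarith
  · -- φ relation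
    refine ⟨1 / P, by positivity, fun n => ?_⟩
    by_cases h0 : n = 0
    · subst h0
      rw [hφapp 0, if_pos rfl, if_neg h0m, hψapp 1, if_pos rfl, if_neg h1N]
      have h01 : Real.sqrt (((0:ℕ):ℝ) + 1) = 1 := by norm_num
      rw [h01]
      push_cast
      ring
    · by_cases hm : n = m
      · subst hm
        rw [hφapp m, if_neg (Ne.symm h0m), if_pos rfl, hψapp (m+1)]
        rw [if_neg (by omega : ¬ m + 1 = 1), if_pos hm1]
        have hcast : ((m:ℝ) + 1) = (N:ℝ) := by exact_mod_cast congrArg (Nat.cast (R := ℝ)) hm1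
        rw [hcast, ← hNβ]
        push_cast
        ring
      · rw [hφapp n, if_neg h0, if_neg hm, hψapp (n+1),
          if_neg (by omega : ¬ n + 1 = 1), if_neg (by omega : ¬ n + 1 = N)]
        simp
  · -- χ relation
    refine ⟨1 / Q, by positivity, fun n => ?_⟩
    by_cases h0 : n = 0
    · subst h0
      rw [hχapp 0, if_pos rfl, if_neg h0m, hψapp 1, if_pos rfl, if_neg h1N]
      have h01 : Real.sqrt (((0:ℕ):ℝ) + 1) = 1 := by norm_num
      have hexp0 : Real.exp (-γ * (((0:ℕ):ℝ) + 1)) = r1 := by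
        rw [hr1def]; norm_num
      rw [h01, hexp0]
      push_cast
      ring
    · by_cases hm : n = m
      · subst hm
        rw [hχapp m, if_neg (Ne.symm h0m), if_pos rfl, hψapp (m+1)]
        rw [if_neg (by omega : ¬ m + 1 = 1), if_pos hm1]
        have hcast : ((m:ℝ) + 1) = (N:ℝ) := by exact_mod_cast congrArg (Nat.cast (R := ℝ)) hm1
        rw [hcast, ← hrNdef, ← hNβ]
        push_cast
        ring
      · rw [hχapp n, if_neg h0, if_neg hm, hψapp (n+1),
          if_neg (by omega : ¬ n + 1 = 1), if_neg (by omega : ¬ n + 1 = N)]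
        simp
  · -- trace norm bound
    have hαα : α * α = a := by rw [← sq]; exact hα2
    have hEE : sE * sE = E := by rw [← sq]; exact hsE2
    have hinner : ⟪χv, φv⟫_ℂ = (s : ℂ) := by
      rw [hχdef, hφdef, inner_comb h0m]
      congr 1
      rw [hsdef]
      calc (r1*α/Q)*(α/P) + (sE*rN/Q)*(sE/P)
          = (r1*(α*α) + (sE*sE)*rN)/(Q*P) := by ring
        _ = (r1*a + E*rN)/(Q*P) := by rw [hαα, hEE]
    obtain ⟨u, hu1, hu2⟩ := exists_eigvec hφnorm hχnorm hinner hst ht0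
    have horth : Orthonormal ℂ (fun _ : Fin 1 => u) :=
      ⟨fun _ => hu1, fun i j hij => absurd (Subsingleton.elim i j) hij⟩
    have hle := le_traceNorm_of_bound (rankOne φv - rankOne χv) 2
      (fun n e f he hf => sum_le_two hφnorm hχnorm e f he hf)
      (fun _ : Fin 1 => u) (fun _ : Fin 1 => u) horth horth
    rw [Fin.sum_univ_one, hu2, Complex.norm_real, Real.norm_eq_abs, abs_of_pos ht0] at hle
    linarith
end

section
/- Let c_n be complex with Σ|c_n|² = 1, F₁ = Σ n|c_n|² > 0, F₂ = Σ n²|c_n|² < ∞, and γ > 0. By Cauchy–Schwarz, (Σ_{n≥1} |c_n|² n e^{-γn})² ≤ (Σ_{k≥1} |c_k|² k e^{-2γk})(Σ_{k≥1} |c_k|² k), and the quantity D = 2√(1 − (Σ|c_n|² n e^{-γn})²/((Σ|c_k|² k e^{-2γk})(Σ|c_k|² k))) satisfies D ≤ 2√(1 − ((F₁ − γF₂)/F₁)²) < √(8γF₂/F₁) whenever γF₂ < F₁. -/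
/-!
Write `p n = n |c n|²`, so that `F₁ = ∑ p n` and `F₂ = ∑ n p n`. Cauchy–Schwarz for the splitting
`p e^{-γn} = √(p e^{-2γn}) · √p` gives the first inequality. The convexity bound `e^{-γn} ≥ 1 - γn`
gives `∑ p e^{-γn} ≥ F₁ - γF₂ > 0`, while `∑ p e^{-2γn} ≤ F₁`; together they bound the ratio inside
the square root from below by `((F₁ - γF₂)/F₁)²`. Finally, with `t = γF₂/F₁`, positive because
`F₂ ≥ F₁ > 0`, `4(1 - (1 - t)²) = 8t - 4t² < 8t`.
-/

open Real

theorem tsum_sq_le_tsum_mul_tsum_of_sq_le_mul {ι : Type*} {r f g : ι → ℝ}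
    (hr : ∀ i, 0 ≤ r i) (hf : ∀ i, 0 ≤ f i) (hg : ∀ i, 0 ≤ g i)
    (hfs : Summable f) (hgs : Summable g) (hrfg : ∀ i, r i ^ 2 ≤ f i * g i) :
    (∑' i, r i) ^ 2 ≤ (∑' i, f i) * ∑' i, g i := by
  have hFG : 0 ≤ (∑' i, f i) * ∑' i, g i := mul_nonneg (tsum_nonneg hf) (tsum_nonneg hg)
  have hfinite (s : Finset ι) : (∑ i ∈ s, r i) ^ 2 ≤ (∑' i, f i) * ∑' i, g i :=
    (Finset.sum_sq_le_sum_mul_sum_of_sq_le_mul s (fun i _ => hf i) (fun i _ => hg i)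
      (fun i _ => hrfg i)).trans <|
      mul_le_mul (hfs.sum_le_tsum s fun i _ => hf i) (hgs.sum_le_tsum s fun i _ => hg i)
        (Finset.sum_nonneg fun i _ => hg i) (tsum_nonneg hf)
  have hsqrt : ∑' i, r i ≤ √((∑' i, f i) * ∑' i, g i) :=
    tsum_le_of_sum_le' (sqrt_nonneg _) fun s => (le_abs_self _).trans (abs_le_sqrt (hfinite s))
  calc (∑' i, r i) ^ 2 ≤ √((∑' i, f i) * ∑' i, g i) ^ 2 := by gcongr; exact tsum_nonneg hr
    _ = (∑' i, f i) * ∑' i, g i := sq_sqrt hFG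

theorem sqrt_one_sub_sq_div_mul_le {a x y z : ℝ} (ha : 0 < a) (hax : a ≤ x)
    (hxyz : x ^ 2 ≤ y * z) (hy : 0 ≤ y) (hyz : y ≤ z) :
    √(1 - x ^ 2 / (y * z)) ≤ √(1 - (a / z) ^ 2) := by
  have hyz_pos : 0 < y * z := by nlinarith
  gcongr √(1 - ?_)
  rw [div_pow]
  exact div_le_div₀ (sq_nonneg x) (pow_le_pow_left₀ ha.le hax 2) hyz_pos (by nlinarith)

theorem two_mul_sqrt_one_sub_sq_sub_div_lt {a b : ℝ} (ha : 0 < a) (hb : 0 < b) :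
    2 * √(1 - ((a - b) / a) ^ 2) < √(8 * b / a) := by
  set t := b / a with ht
  have ht_pos : 0 < t := div_pos hb ha
  have hsub : (a - b) / a = 1 - t := by rw [ht]; field_simp
  have h8 : 8 * b / a = 8 * t := by rw [ht]; ring
  rw [hsub, h8, show (2 : ℝ) = √4 by rw [show (4 : ℝ) = 2 ^ 2 by norm_num, sqrt_sq zero_le_two],
    ← sqrt_mul zero_le_four, sqrt_lt_sqrt_iff_of_pos (by positivity)]
  nlinarith

theorem mul_exp_mul_le_self {p e s : ℝ} (hp : 0 ≤ p) (he : 0 ≤ e) (hs : s ≤ 0) :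
    p * exp (s * e) ≤ p :=
  mul_le_of_le_one_right hp (exp_le_one_iff.mpr (mul_nonpos_of_nonpos_of_nonneg hs he))

section ExpWeightedSums

variable {ι : Type*} {p E : ι → ℝ}

theorem summable_mul_exp_mul (hp : ∀ i, 0 ≤ p i) (hE : ∀ i, 0 ≤ E i) (hps : Summable p)
    {s : ℝ} (hs : s ≤ 0) : Summable fun i => p i * exp (s * E i) :=
  hps.of_nonneg_of_le (fun i => mul_nonneg (hp i) (exp_pos _).le)
    fun i => mul_exp_mul_le_self (hp i) (hE i) hs

theorem tsum_mul_exp_mul_le (hp : ∀ i, 0 ≤ p i) (hE : ∀ i, 0 ≤ E i) (hps : Summable p)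
    {s : ℝ} (hs : s ≤ 0) : ∑' i, p i * exp (s * E i) ≤ ∑' i, p i :=
  (summable_mul_exp_mul hp hE hps hs).tsum_le_tsum (fun i => mul_exp_mul_le_self (hp i) (hE i) hs)
    hps

theorem sq_tsum_mul_exp_le (hp : ∀ i, 0 ≤ p i) (hE : ∀ i, 0 ≤ E i) (hps : Summable p)
    {γ : ℝ} (hγ : 0 ≤ γ) :
    (∑' i, p i * exp (-γ * E i)) ^ 2 ≤
      (∑' i, p i * exp (-2 * γ * E i)) * ∑' i, p i := by
  refine tsum_sq_le_tsum_mul_tsum_of_sq_le_mul (fun i => mul_nonneg (hp i) (exp_pos _).le)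
    (fun i => mul_nonneg (hp i) (exp_pos _).le) hp
    (summable_mul_exp_mul hp hE hps (by linarith)) hps fun i => le_of_eq ?_
  rw [show -2 * γ * E i = -γ * E i + -γ * E i by ring, exp_add]
  ring

theorem sub_mul_le_tsum_mul_exp {γ F₁ F₂ : ℝ} (hp : ∀ i, 0 ≤ p i) (hE : ∀ i, 0 ≤ E i)
    (hγ : 0 ≤ γ) (hF₁ : HasSum p F₁) (hF₂ : HasSum (fun i => E i * p i) F₂) :
    F₁ - γ * F₂ ≤ ∑' i, p i * exp (-γ * E i) := by
  have hlin : HasSum (fun i => p i - γ * (E i * p i)) (F₁ - γ * F₂) := hF₁.sub (hF₂.mul_left γ)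
  rw [← hlin.tsum_eq]
  refine hlin.summable.tsum_le_tsum (fun i => ?_)
    (summable_mul_exp_mul hp hE hF₁.summable (by linarith))
  nlinarith [mul_le_mul_of_nonneg_left (add_one_le_exp (-γ * E i)) (hp i)]

end ExpWeightedSums

theorem stmt_13_general (c : ℕ → ℂ) (γ F₁ F₂ : ℝ) (hγ : 0 < γ)
    (hF₁ : HasSum (fun n : ℕ => (n : ℝ) * ‖c n‖^2) F₁) (hF₁pos : 0 < F₁)
    (hF₂ : HasSum (fun n : ℕ => (n : ℝ)^2 * ‖c n‖^2) F₂)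
    (hsmall : γ * F₂ < F₁) :
    (∑' n : ℕ, ‖c n‖^2 * (n : ℝ) * Real.exp (-γ*(n : ℝ)))^2 ≤
      (∑' n : ℕ, ‖c n‖^2 * (n : ℝ) * Real.exp (-2*γ*(n : ℝ))) *
        (∑' n : ℕ, ‖c n‖^2 * (n : ℝ)) ∧
    2 * Real.sqrt (1 -
        (∑' n : ℕ, ‖c n‖^2 * (n : ℝ) * Real.exp (-γ*(n : ℝ)))^2 /
          ((∑' n : ℕ, ‖c n‖^2 * (n : ℝ) * Real.exp (-2*γ*(n : ℝ))) *
            (∑' n : ℕ, ‖c n‖^2 * (n : ℝ))))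
      ≤ 2 * Real.sqrt (1 - ((F₁ - γ*F₂)/F₁)^2) ∧
    2 * Real.sqrt (1 - ((F₁ - γ*F₂)/F₁)^2) < Real.sqrt (8*γ*F₂/F₁) := by
  have hp (n : ℕ) : 0 ≤ ‖c n‖ ^ 2 * (n : ℝ) := by positivity
  have hE (n : ℕ) : 0 ≤ (n : ℝ) := n.cast_nonneg
  have hpF₁ : HasSum (fun n : ℕ => ‖c n‖ ^ 2 * (n : ℝ)) F₁ := by simpa only [mul_comm] using hF₁
  have hpF₂ : HasSum (fun n : ℕ => (n : ℝ) * (‖c n‖ ^ 2 * n)) F₂ := by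
    convert hF₂ using 2; ring
  have hF₁_le_F₂ : F₁ ≤ F₂ := hasSum_le (fun n => by
    rcases n.eq_zero_or_pos with rfl | hn
    · simp
    · have : (1 : ℝ) ≤ n := by exact_mod_cast hn
      nlinarith [hp n]) hF₁ hF₂
  have hCS := sq_tsum_mul_exp_le hp hE hpF₁.summable hγ.le
  refine ⟨hCS, ?_, ?_⟩
  · rw [hpF₁.tsum_eq] at hCS ⊢
    gcongr 2 * ?_
    exact sqrt_one_sub_sq_div_mul_le (by linarith)
      (sub_mul_le_tsum_mul_exp hp hE hγ.le hpF₁ hpF₂) hCS (tsum_nonneg fun n => by positivity)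
      (hpF₁.tsum_eq ▸ tsum_mul_exp_mul_le hp hE hpF₁.summable (by linarith))
  · rw [mul_assoc 8]
    exact two_mul_sqrt_one_sub_sq_sub_div_lt hF₁pos (mul_pos hγ (by linarith))

/-- Analytic chain of inequalities behind Proposition 5: Cauchy–Schwarz for the
weighted sums, and the bound `D ≤ 2√(1-((F₁-γF₂)/F₁)²) < √(8γF₂/F₁)`. -/
theorem stmt_13 (c : ℕ → ℂ) (γ F₁ F₂ : ℝ) (hγ : 0 < γ)
    (hnorm : ∑' n : ℕ, ‖c n‖^2 = 1)
    (hF₁ : HasSum (fun n : ℕ => (n : ℝ) * ‖c n‖^2) F₁) (hF₁pos : 0 < F₁)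
    (hF₂ : HasSum (fun n : ℕ => (n : ℝ)^2 * ‖c n‖^2) F₂)
    (hsmall : γ * F₂ < F₁) :
    (∑' n : ℕ, ‖c n‖^2 * (n : ℝ) * Real.exp (-γ*(n : ℝ)))^2 ≤
      (∑' n : ℕ, ‖c n‖^2 * (n : ℝ) * Real.exp (-2*γ*(n : ℝ))) *
        (∑' n : ℕ, ‖c n‖^2 * (n : ℝ)) ∧
    2 * Real.sqrt (1 -
        (∑' n : ℕ, ‖c n‖^2 * (n : ℝ) * Real.exp (-γ*(n : ℝ)))^2 /
          ((∑' n : ℕ, ‖c n‖^2 * (n : ℝ) * Real.exp (-2*γ*(n : ℝ))) *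
            (∑' n : ℕ, ‖c n‖^2 * (n : ℝ))))
      ≤ 2 * Real.sqrt (1 - ((F₁ - γ*F₂)/F₁)^2) ∧
    2 * Real.sqrt (1 - ((F₁ - γ*F₂)/F₁)^2) < Real.sqrt (8*γ*F₂/F₁) :=
  stmt_13_general c γ F₁ F₂ hγ hF₁ hF₁pos hF₂ hsmall
end

section
/- For every ε > 0 and finite E > 0, choosing γ = E₁ε²/(8E₂) with E₁ ≤ F₁ and F₂ ≤ E₂: if a pure state |ψ⟩ = Σ c_n|n⟩ satisfies Σ n|c_n|² ≥ E₁ > 0 and Σ n²|c_n|² ≤ E₂ < ∞, then ‖ρ̃₋ − N₋(γ)[ρ]/tr N₋(γ)[ρ]‖₁ < ε, where ρ = |ψ⟩⟨ψ|, ρ̃₋ = aρa†/tr[aρa†], and N₋(γ)[ρ] = (e^{2γ}−1) a e^{-γa†a} ρ e^{-γa†a} a†. -/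
set_option maxHeartbeats 1000000

open scoped InnerProductSpace ENNReal

section OperatorLemmas

variable {H : Type*} [NormedAddCommGroup H] [InnerProductSpace ℂ H]

lemma sum_abs_inner_le {n : ℕ} {e f : Fin n → H} (he : Orthonormal ℂ e) (hf : Orthonormal ℂ f)
    (s t : H) : ∑ i, ‖⟪s, e i⟫_ℂ‖ * ‖⟪f i, t⟫_ℂ‖ ≤ ‖s‖ * ‖t‖ := by
  have h1 : ∑ i, ‖⟪s, e i⟫_ℂ‖ ^ 2 ≤ ‖s‖ ^ 2 := by
    have := he.sum_inner_products_le s (s := Finset.univ)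
    simpa [norm_inner_symm] using this
  have h2 : ∑ i, ‖⟪f i, t⟫_ℂ‖ ^ 2 ≤ ‖t‖ ^ 2 := hf.sum_inner_products_le t (s := Finset.univ)
  have h3 := Finset.sum_mul_sq_le_sq_mul_sq Finset.univ (fun i => ‖⟪s, e i⟫_ℂ‖)
    (fun i => ‖⟪f i, t⟫_ℂ‖)
  refine le_of_pow_le_pow_left₀ two_ne_zero (mul_nonneg (norm_nonneg _) (norm_nonneg _)) ?_
  calc (∑ i, ‖⟪s, e i⟫_ℂ‖ * ‖⟪f i, t⟫_ℂ‖) ^ 2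
      ≤ (∑ i, ‖⟪s, e i⟫_ℂ‖ ^ 2) * ∑ i, ‖⟪f i, t⟫_ℂ‖ ^ 2 := h3
    _ ≤ ‖s‖ ^ 2 * ‖t‖ ^ 2 := by
        have := Finset.sum_nonneg (s := Finset.univ) fun i _ => sq_nonneg ‖⟪f i, t⟫_ℂ‖
        exact mul_le_mul h1 h2 this (sq_nonneg _)
    _ = (‖s‖ * ‖t‖) ^ 2 := by ring

lemma traceNorm_le {T : H →L[ℂ] H} {M : ℝ} (hM : 0 ≤ M)
    (h : ∀ (n : ℕ) (e f : Fin n → H), Orthonormal ℂ e → Orthonormal ℂ f →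
      ∑ i, ‖⟪f i, T (e i)⟫_ℂ‖ ≤ M) : traceNorm T ≤ M :=
  Real.iSup_le (fun n => Real.iSup_le (fun e => Real.iSup_le (fun f =>
    Real.iSup_le (fun he => Real.iSup_le (fun hf => h n e f he hf) hM) hM) hM) hM) hM

lemma traceNorm_rankOne_sub_le (φ χ : H) :
    traceNorm (rankOne φ - rankOne χ) ≤ ‖φ + χ‖ * ‖φ - χ‖ := by
  set s := φ + χ with hs
  set t := φ - χ with ht
  have hT : ∀ x, (rankOne φ - rankOne χ) x
      = ((2:ℂ)⁻¹ * ⟪s, x⟫_ℂ) • t + ((2:ℂ)⁻¹ * ⟪t, x⟫_ℂ) • s := by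
    intro x
    simp only [ContinuousLinearMap.sub_apply, rankOne, ContinuousLinearMap.smulRight_apply,
      innerSL_apply_apply, hs, ht, inner_add_left, inner_sub_left]
    module
  apply traceNorm_le (mul_nonneg (norm_nonneg _) (norm_nonneg _))
  intro n e f he hf
  calc ∑ i, ‖⟪f i, (rankOne φ - rankOne χ) (e i)⟫_ℂ‖
      ≤ ∑ i, (2⁻¹ * (‖⟪s, e i⟫_ℂ‖ * ‖⟪f i, t⟫_ℂ‖) + 2⁻¹ * (‖⟪t, e i⟫_ℂ‖ * ‖⟪f i, s⟫_ℂ‖)) := by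
        refine Finset.sum_le_sum fun i _ => ?_
        rw [hT, inner_add_right]
        refine (norm_add_le _ _).trans (le_of_eq ?_)
        simp [inner_smul_right, norm_mul]
        ring
    _ = 2⁻¹ * (∑ i, ‖⟪s, e i⟫_ℂ‖ * ‖⟪f i, t⟫_ℂ‖) + 2⁻¹ * ∑ i, ‖⟪t, e i⟫_ℂ‖ * ‖⟪f i, s⟫_ℂ‖ := by
        rw [Finset.sum_add_distrib, ← Finset.mul_sum, ← Finset.mul_sum]
    _ ≤ 2⁻¹ * (‖s‖ * ‖t‖) + 2⁻¹ * (‖t‖ * ‖s‖) := by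
        gcongr
        · exact sum_abs_inner_le he hf s t
        · exact sum_abs_inner_le he hf t s
    _ = ‖s‖ * ‖t‖ := by ring

end OperatorLemmas

section Helpers

lemma lp_norm_sq (x : lp (fun _ : ℕ => ℂ) 2) : ‖x‖ ^ 2 = ∑' n, ‖x n‖ ^ 2 := by
  have h := lp.norm_rpow_eq_tsum (by norm_num) x
  have h2 : ((2 : ℝ≥0∞).toReal) = ((2 : ℕ) : ℝ) := by norm_num
  rw [h2] at h
  simpa [Real.rpow_natCast] using h

lemma inner_ofReal_mul (r s : ℝ) (z : ℂ) :
    ⟪(r : ℂ) * z, (s : ℂ) * z⟫_ℂ = ((r * s * ‖z‖ ^ 2 : ℝ) : ℂ) := by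
  rw [RCLike.inner_apply]
  simp only [map_mul, Complex.conj_ofReal]
  rw [show (s:ℂ) * z * ((r:ℂ) * (starRingEnd ℂ) z) = (r:ℂ) * (s:ℂ) * ((starRingEnd ℂ) z * z)
    by ring, ← Complex.normSq_eq_conj_mul_self]
  rw [Complex.normSq_eq_norm_sq]
  push_cast
  ring

end Helpers

/-- Uniform convergence of approximate photon subtraction on
energy-second-moment-constrained states with nonvanishing energy: with
`γ = E₁ε²/(8E₂)`, for every pure state `ψ` with energy `≥ E₁ > 0` and energy second
moment `≤ E₂ < ∞`, the trace distance between the ideal photon-subtracted state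
(projection onto `φ`, `φ_n ∝ √(n+1) ψ_{n+1}`) and the normalized output of `N₋(γ)`
(projection onto `χ`, `χ_n ∝ √(n+1) e^{-γ(n+1)} ψ_{n+1}`) is `< ε`. -/
theorem stmt_15 (ε E₁ E₂ : ℝ) (hε : 0 < ε) (hE₁ : 0 < E₁)
    (ψ φ χ : lp (fun _ : ℕ => ℂ) 2) (hψ : ‖ψ‖ = 1)
    (hsm : Summable (fun n : ℕ => (n : ℝ)^2 * ‖ψ n‖^2))
    (henergy : E₁ ≤ ∑' n : ℕ, (n : ℝ) * ‖ψ n‖^2)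
    (hmoment : (∑' n : ℕ, (n : ℝ)^2 * ‖ψ n‖^2) ≤ E₂)
    (hφn : ‖φ‖ = 1) (hχn : ‖χ‖ = 1)
    (hφ : ∃ c : ℝ, 0 < c ∧ ∀ n : ℕ,
      φ n = ((c * Real.sqrt ((n : ℝ) + 1) : ℝ) : ℂ) * ψ (n + 1))
    (hχ : ∃ d : ℝ, 0 < d ∧ ∀ n : ℕ,
      χ n = ((d * Real.sqrt ((n : ℝ) + 1) *
        Real.exp (-(E₁*ε^2/(8*E₂))*((n : ℝ)+1)) : ℝ) : ℂ) * ψ (n + 1)) :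
    traceNorm (rankOne φ - rankOne χ) < ε := by
  obtain ⟨c, hc, hφc⟩ := hφ
  obtain ⟨d, hd, hχd⟩ := hχ
  set γ : ℝ := E₁*ε^2/(8*E₂) with hγdef
  -- summability of first moment
  have hsum1 : Summable (fun n : ℕ => (n : ℝ) * ‖ψ n‖^2) := by
    refine Summable.of_nonneg_of_le
      (fun n => mul_nonneg (Nat.cast_nonneg n) (sq_nonneg _)) (fun n => ?_) hsm
    exact mul_le_mul_of_nonneg_right
      (by exact_mod_cast Nat.le_self_pow two_ne_zero n) (sq_nonneg _)
  set fE : ℕ → ℝ := fun n => ((n:ℝ)+1) * ‖ψ (n+1)‖^2 with hfE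
  have hfEnn : ∀ n, 0 ≤ fE n := fun n => mul_nonneg (by positivity) (sq_nonneg _)
  have hfEs : Summable fE := by
    have h := hsum1.comp_injective (add_left_injective 1)
    have e : ((fun n : ℕ => (n : ℝ) * ‖ψ n‖^2) ∘ (· + 1)) = fE := by
      funext n; simp only [Function.comp_apply, hfE]; push_cast; ring
    rwa [e] at h
  set g2 : ℕ → ℝ := fun n => ((n:ℝ)+1)^2 * ‖ψ (n+1)‖^2 with hg2
  have hg2s : Summable g2 := by
    have h := hsm.comp_injective (add_left_injective 1)
    have e : ((fun n : ℕ => (n : ℝ)^2 * ‖ψ n‖^2) ∘ (· + 1)) = g2 := by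
      funext n; simp only [Function.comp_apply, hg2]; push_cast; ring
    rwa [e] at h
  set S : ℝ := ∑' n, fE n with hSdef
  set M : ℝ := ∑' n, g2 n with hMdef
  have hS_eq : ∑' n : ℕ, (n : ℝ) * ‖ψ n‖^2 = S := by
    rw [Summable.tsum_eq_zero_add hsum1]
    have h0 : ((0:ℕ):ℝ) * ‖ψ 0‖^2 = 0 := by norm_num
    rw [h0, zero_add]
    exact tsum_congr fun n => by push_cast; ring
  have hM_eq : ∑' n : ℕ, (n : ℝ)^2 * ‖ψ n‖^2 = M := by
    rw [Summable.tsum_eq_zero_add hsm]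
    have h0 : ((0:ℕ):ℝ)^2 * ‖ψ 0‖^2 = 0 := by norm_num
    rw [h0, zero_add]
    exact tsum_congr fun n => by push_cast; ring
  have hS_ge : E₁ ≤ S := hS_eq ▸ henergy
  have hSpos : 0 < S := lt_of_lt_of_le hE₁ hS_ge
  have hM_le : M ≤ E₂ := hM_eq ▸ hmoment
  have hSM : S ≤ M := by
    refine Summable.tsum_le_tsum (fun n => ?_) hfEs hg2s
    have : ((n:ℝ)+1) ≤ ((n:ℝ)+1)^2 := by nlinarith [Nat.cast_nonneg (α := ℝ) n]
    exact mul_le_mul_of_nonneg_right this (sq_nonneg _)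
  have hE₂ : 0 < E₂ := lt_of_lt_of_le hSpos (hSM.trans hM_le)
  have hγpos : 0 < γ := by rw [hγdef]; positivity
  -- norm computations
  have hφnorm : ∀ n, ‖φ n‖^2 = c^2 * fE n := by
    intro n
    have h1 : (0:ℝ) ≤ c * Real.sqrt ((n:ℝ)+1) := mul_nonneg hc.le (Real.sqrt_nonneg _)
    rw [hφc n, norm_mul, Complex.norm_real, Real.norm_eq_abs, abs_of_nonneg h1, mul_pow, mul_pow,
      Real.sq_sqrt (by positivity)]
    simp only [hfE]; ring
  set w : ℕ → ℝ := fun n => fE n * Real.exp (-(2*γ)*((n:ℝ)+1)) with hw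
  have hwnn : ∀ n, 0 ≤ w n := fun n => mul_nonneg (hfEnn n) (Real.exp_nonneg _)
  have hw_le : ∀ n, w n ≤ fE n := by
    intro n
    have : Real.exp (-(2*γ)*((n:ℝ)+1)) ≤ 1 := by
      rw [Real.exp_le_one_iff]
      have : (0:ℝ) ≤ 2*γ*((n:ℝ)+1) := by positivity
      nlinarith
    simp only [hw]
    exact mul_le_of_le_one_right (hfEnn n) this
  have hws : Summable w := Summable.of_nonneg_of_le hwnn hw_le hfEs
  set S' : ℝ := ∑' n, w n with hS'def
  have hχnorm : ∀ n, ‖χ n‖^2 = d^2 * w n := by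
    intro n
    have h1 : (0:ℝ) ≤ d * Real.sqrt ((n:ℝ)+1) * Real.exp (-γ*((n:ℝ)+1)) := by positivity
    rw [hχd n, norm_mul, Complex.norm_real, Real.norm_eq_abs, abs_of_nonneg h1, mul_pow, mul_pow, mul_pow,
      Real.sq_sqrt (by positivity)]
    have he : Real.exp (-γ*((n:ℝ)+1))^2 = Real.exp (-(2*γ)*((n:ℝ)+1)) := by
      rw [sq, ← Real.exp_add]; congr 1; ring
    rw [he]
    simp only [hw, hfE]; ring
  have hc2S : c^2 * S = 1 := by
    have h := lp_norm_sq φ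
    rw [hφn] at h
    have h2 : ∑' n, ‖φ n‖^2 = c^2 * S := by
      rw [hSdef, ← tsum_mul_left]
      exact tsum_congr fun n => hφnorm n
    rw [h2] at h; norm_num at h; linarith
  have hd2S' : d^2 * S' = 1 := by
    have h := lp_norm_sq χ
    rw [hχn] at h
    have h2 : ∑' n, ‖χ n‖^2 = d^2 * S' := by
      rw [hS'def, ← tsum_mul_left]
      exact tsum_congr fun n => hχnorm n
    rw [h2] at h; norm_num at h; linarith
  have hS'pos : 0 < S' := by nlinarith [sq_nonneg d]
  -- the overlap
  set o : ℝ := (⟪φ, χ⟫_ℂ).re with ho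
  have hinner : ⟪φ, χ⟫_ℂ = ((c * d * ∑' n, fE n * Real.exp (-γ*((n:ℝ)+1)) : ℝ) : ℂ) := by
    rw [lp.inner_eq_tsum]
    rw [← tsum_mul_left, Complex.ofReal_tsum]
    refine tsum_congr fun n => ?_
    rw [hφc n, hχd n, inner_ofReal_mul]
    congr 1
    have hss : Real.sqrt ((n:ℝ)+1) * Real.sqrt ((n:ℝ)+1) = (n:ℝ)+1 :=
      Real.mul_self_sqrt (by positivity)
    simp only [hfE]
    linear_combination (c * d * Real.exp (-γ*((n:ℝ)+1)) * ‖ψ (n+1)‖^2) * hss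
  have hsum_mid : Summable (fun n => fE n * Real.exp (-γ*((n:ℝ)+1))) := by
    refine Summable.of_nonneg_of_le (fun n => by positivity) (fun n => ?_) hfEs
    have : Real.exp (-γ*((n:ℝ)+1)) ≤ 1 := by
      rw [Real.exp_le_one_iff]
      have : (0:ℝ) ≤ γ*((n:ℝ)+1) := by positivity
      nlinarith
    nlinarith [hfEnn n]
  have ho_ge : c*d*S' ≤ o := by
    rw [ho, hinner, Complex.ofReal_re]
    have hle : S' ≤ ∑' n, fE n * Real.exp (-γ*((n:ℝ)+1)) := by
      refine Summable.tsum_le_tsum (fun n => ?_) hws hsum_mid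
      refine mul_le_mul_of_nonneg_left ?_ (hfEnn n)
      apply Real.exp_le_exp.2
      nlinarith [Nat.cast_nonneg (α := ℝ) n]
    calc c*d*S' ≤ c*d*∑' n, fE n * Real.exp (-γ*((n:ℝ)+1)) :=
          mul_le_mul_of_nonneg_left hle (by positivity)
      _ = _ := by ring
  have ho_le : o ≤ 1 := by
    have h := re_inner_le_norm (𝕜 := ℂ) φ χ
    rw [hφn, hχn] at h
    simpa [ho, RCLike.re_to_complex] using h
  -- key quadratic bound
  have hsq : S' / S ≤ o^2 := by
    have h0 : 0 ≤ c*d*S' := by positivity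
    have h1 : (c*d*S')^2 ≤ o^2 := pow_le_pow_left₀ h0 ho_ge 2
    have h2 : (c*d*S')^2 * S = S' := by
      have e1 : (c*d*S')^2*S = (c^2*S)*(d^2*S')*S' := by ring
      rw [e1, hc2S, hd2S']; ring
    rw [div_le_iff₀ hSpos, ← h2]
    nlinarith [hSpos]
  -- strict bound on S - S'
  have hex : ∃ n, 0 < fE n := by
    by_contra h
    push_neg at h
    have : ∀ n, fE n = 0 := fun n => le_antisymm (h n) (hfEnn n)
    have : S = 0 := by rw [hSdef]; simp [this]
    linarith
  obtain ⟨n₀, hn₀⟩ := hex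
  have hdiff : S - S' < 2*γ*M := by
    have hsub : S - S' = ∑' n, (fE n - w n) := by
      rw [hSdef, hS'def, Summable.tsum_sub hfEs hws]
    rw [hsub]
    have h2γM : (2:ℝ)*γ*M = ∑' n, 2*γ*g2 n := by rw [← tsum_mul_left]
    rw [h2γM]
    refine Summable.tsum_lt_tsum (i := n₀) (f := fun n => fE n - w n) (fun n => ?_) ?_
      (hfEs.sub hws) (hg2s.mul_left _)
    · show fE n - w n ≤ 2*γ*g2 n
      have hb := Real.add_one_le_exp (-(2*γ)*((n:ℝ)+1))
      have : fE n - w n = fE n * (1 - Real.exp (-(2*γ)*((n:ℝ)+1))) := by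
        simp only [hw]; ring
      rw [this]
      have h1 : fE n * (1 - Real.exp (-(2*γ)*((n:ℝ)+1))) ≤ fE n * (2*γ*((n:ℝ)+1)) := by
        refine mul_le_mul_of_nonneg_left ?_ (hfEnn n)
        nlinarith
      refine h1.trans (le_of_eq ?_)
      simp only [hg2, hfE]; ring
    · show fE n₀ - w n₀ < 2*γ*g2 n₀
      have hne : -(2*γ)*((n₀:ℝ)+1) ≠ 0 := by
        have hpos : (0:ℝ) < 2*γ*((n₀:ℝ)+1) := by positivity
        intro hcon
        rw [neg_mul] at hcon
        linarith [neg_eq_zero.mp hcon]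
      have hb := Real.add_one_lt_exp hne
      have e1 : fE n₀ - w n₀ = fE n₀ * (1 - Real.exp (-(2*γ)*((n₀:ℝ)+1))) := by
        simp only [hw]; ring
      have e2 : 2*γ*g2 n₀ = fE n₀ * (2*γ*((n₀:ℝ)+1)) := by simp only [hg2, hfE]; ring
      rw [e1, e2]
      have : (1 - Real.exp (-(2*γ)*((n₀:ℝ)+1))) < 2*γ*((n₀:ℝ)+1) := by nlinarith
      exact mul_lt_mul_of_pos_left this hn₀
  have hdiff2 : S - S' < 2*γ*E₂ := by
    have : 2*γ*M ≤ 2*γ*E₂ := by nlinarith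
    linarith
  -- conclude 1 - o² < ε²/4
  have h1mo : 1 - o^2 < ε^2/4 := by
    have hkey : (1-o^2)*S ≤ S - S' := by
      rw [div_le_iff₀ hSpos] at hsq
      nlinarith
    have hfrac : 2*γ*E₂ = ε^2/4 * E₁ := by
      rw [hγdef]; field_simp; ring
    rcases le_or_gt (1 - o^2) 0 with h|h
    · have : (0:ℝ) < ε^2/4 := by positivity
      linarith
    · have h3 : (1-o^2)*E₁ ≤ (1-o^2)*S := by nlinarith
      have h4 : (1-o^2)*E₁ < ε^2/4 * E₁ := by linarith
      exact lt_of_mul_lt_mul_right (by linarith [h4]) hE₁.le |>.trans_le (le_refl _) |>.trans_le (le_refl _)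
  -- endgame: trace norm bound
  have hns : ‖φ + χ‖^2 = 2 + 2*o := by
    rw [@norm_add_sq ℂ _ _ _ _ φ χ, hφn, hχn]
    simp only [RCLike.re_to_complex]
    rw [← ho]; ring
  have hnt : ‖φ - χ‖^2 = 2 - 2*o := by
    rw [@norm_sub_sq ℂ _ _ _ _ φ χ, hφn, hχn]
    simp only [RCLike.re_to_complex]
    rw [← ho]; ring
  have hprod : (‖φ + χ‖ * ‖φ - χ‖)^2 < ε^2 := by
    have : (‖φ + χ‖ * ‖φ - χ‖)^2 = (2 + 2*o) * (2 - 2*o) := by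
      rw [mul_pow, hns, hnt]
    rw [this]
    nlinarith
  have hlt : ‖φ + χ‖ * ‖φ - χ‖ < ε :=
    lt_of_pow_lt_pow_left₀ 2 hε.le hprod
  exact lt_of_le_of_lt (traceNorm_rankOne_sub_le φ χ) hlt
end

section
/- Let E > 0 and for N ≥ max(√E, 1) define |ψ(N)⟩ = √(1 − E/N²)|0⟩ + √(E/(2N²))|1⟩ + √(E/(2N²))|N⟩. Then the energy second moment tr[|ψ(N)⟩⟨ψ(N)| H²] = (E/(2N²))(1 + N²) ≤ E, while the energy tr[|ψ(N)⟩⟨ψ(N)| H] = (E/(2N²))(1 + N) → 0 as N → ∞. -/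
open Filter

/-- For `|ψ(N)⟩ = √(1-E/N²)|0⟩ + √(E/(2N²))|1⟩ + √(E/(2N²))|N⟩` with
`N ≥ max(√E,1)` (and `N ≥ 2` so that `|1⟩` and `|N⟩` are distinct), the energy second
moment equals `(E/(2N²))(1+N²) ≤ E`, while the energy equals `(E/(2N²))(1+N)`, which
tends to `0` as `N → ∞`. -/
theorem stmt_17 (E : ℝ) (hE : 0 < E) :
    (∀ N : ℕ, 2 ≤ N → max (Real.sqrt E) 1 ≤ (N : ℝ) →
      (∑' n : ℕ, (n : ℝ)^2 *
          (if n = 0 then Real.sqrt (1 - E/(N : ℝ)^2)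
            else if n = 1 then Real.sqrt (E/(2*(N : ℝ)^2))
            else if n = N then Real.sqrt (E/(2*(N : ℝ)^2)) else 0)^2)
        = E/(2*(N : ℝ)^2) * (1 + (N : ℝ)^2) ∧
      E/(2*(N : ℝ)^2) * (1 + (N : ℝ)^2) ≤ E ∧
      (∑' n : ℕ, (n : ℝ) *
          (if n = 0 then Real.sqrt (1 - E/(N : ℝ)^2)
            else if n = 1 then Real.sqrt (E/(2*(N : ℝ)^2))
            else if n = N then Real.sqrt (E/(2*(N : ℝ)^2)) else 0)^2)
        = E/(2*(N : ℝ)^2) * (1 + (N : ℝ))) ∧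
    Tendsto (fun N : ℕ => E/(2*(N : ℝ)^2) * (1 + (N : ℝ))) atTop (nhds 0) := by
  constructor
  · intro N hN2 hNE
    have hN0 : (0:ℝ) < (N:ℝ) := by positivity
    have hc : (0:ℝ) ≤ E/(2*(N:ℝ)^2) := by positivity
    have hsq : Real.sqrt (E/(2*(N:ℝ)^2)) ^ 2 = E/(2*(N:ℝ)^2) := Real.sq_sqrt hc
    have hN1 : N ≠ 1 := by omega
    -- first tsum
    have hNz : N ≠ 0 := by omega
    have key : ∀ (g : ℕ → ℝ), g 0 = 0 →
        (∑' n : ℕ, g n *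
          (if n = 0 then Real.sqrt (1 - E/(N : ℝ)^2)
            else if n = 1 then Real.sqrt (E/(2*(N : ℝ)^2))
            else if n = N then Real.sqrt (E/(2*(N : ℝ)^2)) else 0)^2)
        = g 1 * (E/(2*(N:ℝ)^2)) + g N * (E/(2*(N:ℝ)^2)) := by
      intro g hg0
      rw [tsum_eq_sum (s := {1, N}) ?_]
      · rw [Finset.sum_pair hN1.symm, if_neg one_ne_zero, if_pos rfl,
          if_neg hNz, if_neg hN1, if_pos rfl, hsq]
      · intro n hn
        simp only [Finset.mem_insert, Finset.mem_singleton, not_or] at hn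
        rcases eq_or_ne n 0 with rfl | h0
        · simp [hg0]
        · simp [h0, hn.1, hn.2]
    refine ⟨?_, ?_, ?_⟩
    · have := key (fun n => (n:ℝ)^2) (by norm_num)
      rw [this]; ring
    · have hEN : E ≤ (N:ℝ)^2 := by
        have h1 : Real.sqrt E ≤ (N:ℝ) := le_trans (le_max_left _ _) hNE
        calc E = Real.sqrt E ^ 2 := (Real.sq_sqrt hE.le).symm
          _ ≤ (N:ℝ)^2 := by nlinarith [Real.sqrt_nonneg E]
      rw [div_mul_eq_mul_div, div_le_iff₀ (by positivity)]
      have h2N : (2:ℝ) ≤ (N:ℝ) := by exact_mod_cast hN2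
      have h1N : (1:ℝ) ≤ (N:ℝ)^2 := by nlinarith
      nlinarith [mul_le_mul_of_nonneg_left h1N hE.le]
    · have := key (fun n => (n:ℝ)) (by norm_num)
      rw [this]; ring
  · have heq : (fun N : ℕ => E/(2*(N : ℝ)^2) * (1 + (N : ℝ)))
        = fun N : ℕ => E/2 * ((1/(N:ℝ))^2 + 1/(N:ℝ)) := by
      funext N
      rcases eq_or_ne N 0 with rfl | h
      · simp
      · have : (N:ℝ) ≠ 0 := Nat.cast_ne_zero.mpr h
        field_simp
    rw [heq]
    have h1 : Tendsto (fun N : ℕ => (1/(N:ℝ))^2 + 1/(N:ℝ)) atTop (nhds 0) := by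
      have h := tendsto_one_div_atTop_nhds_zero_nat (𝕜 := ℝ)
      simpa using ((h.pow 2).add h)
    simpa using (h1.const_mul (E/2))
end

section
/- Fix γ > 0 and E > 0, and let |ψ(N)⟩ = √(1 − E/N²)|0⟩ + √(E/(2N²))|1⟩ + √(E/(2N²))|N⟩. In the basis {|0⟩, |N−1⟩}, the ideal photon-subtracted state ρ̃₋(N) = (1/(N+1))·[[1,√N],[√N,N]] converges to [[0,0],[0,1]] while the approximate-subtraction output (1/(e^{-2γ} + N e^{-2γN}))·[[e^{-2γ}, √N e^{-γ(N+1)}],[√N e^{-γ(N+1)}, N e^{-2γN}]] converges to [[1,0],[0,0]] as N → ∞; consequently, the trace norm of their difference tends to 2, so for some finite N it is ≥ 1. -/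
open Filter Matrix

private lemma sqrt_le_self' {x : ℝ} (hx : 1 ≤ x) : Real.sqrt x ≤ x := by
  calc Real.sqrt x ≤ Real.sqrt (x ^ 2) := Real.sqrt_le_sqrt (by nlinarith)
  _ = x := Real.sqrt_sq (by linarith)

private lemma tendsto_mul_exp_neg (c : ℝ) (hc : 0 < c) :
    Tendsto (fun N : ℕ => (N : ℝ) * Real.exp (-c * N)) atTop (nhds 0) := by
  have h1 : Tendsto (fun x : ℝ => x * Real.exp (-x)) atTop (nhds 0) := by
    simpa using Real.tendsto_pow_mul_exp_neg_atTop_nhds_zero 1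
  have h2 : Tendsto (fun N : ℕ => c * (N : ℝ)) atTop atTop :=
    (tendsto_const_mul_atTop_of_pos hc).2 tendsto_natCast_atTop_atTop
  have h3 := (h1.comp h2).const_mul (1 / c)
  rw [mul_zero] at h3
  refine h3.congr fun N => ?_
  simp only [Function.comp]
  field_simp

private lemma tendsto_sqrt_mul_exp (c : ℝ) (hc : 0 < c) :
    Tendsto (fun N : ℕ => Real.sqrt N * Real.exp (-c * ((N : ℝ) + 1))) atTop (nhds 0) := by
  apply squeeze_zero' (g := fun N : ℕ => (N : ℝ) * Real.exp (-c * N))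
  · filter_upwards with N; positivity
  · filter_upwards [eventually_ge_atTop 1] with N hN
    have hN1 : (1 : ℝ) ≤ (N : ℝ) := by exact_mod_cast hN
    have hs : Real.sqrt N ≤ (N : ℝ) := sqrt_le_self' hN1
    have he : Real.exp (-c * ((N : ℝ) + 1)) ≤ Real.exp (-c * N) :=
      Real.exp_le_exp.mpr (by nlinarith)
    have h0 : (0:ℝ) ≤ Real.sqrt N := Real.sqrt_nonneg _
    have h0e : (0:ℝ) ≤ Real.exp (-c * ((N:ℝ)+1)) := (Real.exp_pos _).le
    nlinarith [Real.exp_pos (-c * (N:ℝ))]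
  · exact tendsto_mul_exp_neg c hc

private lemma tendsto_sqrt_div :
    Tendsto (fun N : ℕ => Real.sqrt N / ((N : ℝ) + 1)) atTop (nhds 0) := by
  apply squeeze_zero' (g := fun N : ℕ => 1 / Real.sqrt N)
  · filter_upwards with N; positivity
  · filter_upwards [eventually_ge_atTop 1] with N hN
    have hN1 : (1 : ℝ) ≤ (N : ℝ) := by exact_mod_cast hN
    have hs : 0 < Real.sqrt N := Real.sqrt_pos.mpr (by linarith)
    rw [div_le_div_iff₀ (by linarith) hs]
    have : Real.sqrt N * Real.sqrt N = (N : ℝ) := Real.mul_self_sqrt (by linarith)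
    nlinarith
  · have h : Tendsto (fun N : ℕ => Real.sqrt N) atTop atTop := by
      have := (tendsto_rpow_atTop (by norm_num : (0:ℝ) < 1/2)).comp
        (tendsto_natCast_atTop_atTop (R := ℝ))
      refine this.congr fun N => ?_
      simp [Function.comp, Real.sqrt_eq_rpow]
    simpa [one_div, Pi.inv_def] using h.inv_tendsto_atTop


private lemma trace_eq_sum (M : Matrix (Fin 2) (Fin 2) ℝ) (hM : M.IsHermitian) :
    M.trace = ∑ i, hM.eigenvalues i := by
  simpa using hM.trace_eq_sum_eigenvalues

private lemma det_eq_prod (M : Matrix (Fin 2) (Fin 2) ℝ) (hM : M.IsHermitian) :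
    M.det = hM.eigenvalues 0 * hM.eigenvalues 1 := by
  have := hM.det_eq_prod_eigenvalues
  simpa [Fin.prod_univ_two] using this

private lemma matrix_tendsto {f : ℕ → Matrix (Fin 2) (Fin 2) ℝ} {L : Matrix (Fin 2) (Fin 2) ℝ}
    (h : ∀ i j, Tendsto (fun N => f N i j) atTop (nhds (L i j))) :
    Tendsto f atTop (nhds L) := by
  refine tendsto_pi_nhds.2 ?_; intro i; rw [tendsto_pi_nhds]; exact h i

/-- In the basis `{|0⟩, |N-1⟩}`, the ideal photon-subtracted state
`(1/(N+1))·[[1,√N],[√N,N]]` converges to `[[0,0],[0,1]]`, the approximate-subtraction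
output converges to `[[1,0],[0,0]]`, the trace norm (sum of absolute values of the
eigenvalues) of their difference tends to `2`, and hence is `≥ 1` for some finite `N`. -/
theorem stmt_18 (γ E : ℝ) (hγ : 0 < γ) (hE : 0 < E) :
    let A : ℕ → Matrix (Fin 2) (Fin 2) ℝ := fun N =>
      (1/((N : ℝ) + 1)) • !![1, Real.sqrt N; Real.sqrt N, (N : ℝ)]
    let B : ℕ → Matrix (Fin 2) (Fin 2) ℝ := fun N =>
      (1/(Real.exp (-2*γ) + N * Real.exp (-2*γ*N))) •
        !![Real.exp (-2*γ), Real.sqrt N * Real.exp (-γ*((N : ℝ)+1));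
           Real.sqrt N * Real.exp (-γ*((N : ℝ)+1)), N * Real.exp (-2*γ*N)]
    Tendsto A atTop (nhds !![0, 0; 0, 1]) ∧
    Tendsto B atTop (nhds !![1, 0; 0, 0]) ∧
    ∀ h : ∀ N, (A N - B N).IsHermitian,
      Tendsto (fun N => ∑ i, |(h N).eigenvalues i|) atTop (nhds 2) ∧
      ∃ N : ℕ, 1 ≤ ∑ i, |(h N).eigenvalues i| := by
  intro A B
  have hNpos : ∀ N : ℕ, (0:ℝ) < (N:ℝ) + 1 := fun N => by positivity
  have hdpos : ∀ N : ℕ, (0:ℝ) < Real.exp (-2*γ) + N * Real.exp (-2*γ*N) := fun N => by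
    positivity
  -- limit of N * exp(-2γN)
  have hNe : Tendsto (fun N : ℕ => (N:ℝ) * Real.exp (-2*γ*N)) atTop (nhds 0) := by
    refine (tendsto_mul_exp_neg (2*γ) (by linarith)).congr fun N => ?_
    ring_nf
  -- limit of sqrt N * exp(-γ(N+1))
  have hse : Tendsto (fun N : ℕ => Real.sqrt N * Real.exp (-γ*((N:ℝ)+1))) atTop (nhds 0) := by
    refine (tendsto_sqrt_mul_exp γ hγ).congr fun N => ?_
    ring_nf
  have hone : Tendsto (fun N : ℕ => 1/((N:ℝ)+1)) atTop (nhds 0) :=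
    tendsto_one_div_add_atTop_nhds_zero_nat
  -- A limit
  have hA : Tendsto A atTop (nhds !![0, 0; 0, 1]) := by
    apply matrix_tendsto
    intro i j
    fin_cases i <;> fin_cases j <;>
      simp only [A, Matrix.smul_apply, smul_eq_mul] <;> norm_num
    · simpa using hone
    · refine tendsto_sqrt_div.congr fun N => ?_
      rw [div_eq_mul_inv, mul_comm]
    · refine tendsto_sqrt_div.congr fun N => ?_
      rw [div_eq_mul_inv, mul_comm]
    · have : Tendsto (fun N : ℕ => 1 - 1/((N:ℝ)+1)) atTop (nhds (1 - 0)) :=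
        tendsto_const_nhds.sub hone
      rw [sub_zero] at this
      refine this.congr fun N => ?_
      field_simp
      ring
  -- B limit
  have hinv : Tendsto (fun N : ℕ => 1/(Real.exp (-2*γ) + N * Real.exp (-2*γ*N))) atTop
      (nhds (1/Real.exp (-2*γ))) := by
    have hd : Tendsto (fun N : ℕ => Real.exp (-2*γ) + N * Real.exp (-2*γ*N)) atTop
        (nhds (Real.exp (-2*γ))) := by
      have := (tendsto_const_nhds (x := Real.exp (-2*γ)) (f := atTop (α := ℕ))).add hNe
      simpa using this
    simp only [one_div]
    exact hd.inv₀ (Real.exp_ne_zero _)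
  have hB : Tendsto B atTop (nhds !![1, 0; 0, 0]) := by
    apply matrix_tendsto
    intro i j
    fin_cases i <;> fin_cases j <;>
      simp only [B, Matrix.smul_apply, smul_eq_mul] <;> norm_num
    · have := hinv.mul_const (Real.exp (-2*γ))
      simpa [one_div, inv_mul_cancel₀ (Real.exp_ne_zero (-2*γ))] using this
    · simpa using hinv.mul hse
    · simpa using hinv.mul hse
    · simpa using hinv.mul hNe
  refine ⟨hA, hB, fun h => ?_⟩
  -- trace of difference is zero
  have htr : ∀ N, (A N - B N).trace = 0 := by
    intro N
    have h1 : ((N:ℝ)+1) ≠ 0 := (hNpos N).ne'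
    have h2 : Real.exp (-2*γ) + N * Real.exp (-2*γ*N) ≠ 0 := (hdpos N).ne'
    simp only [A, B, Matrix.trace_sub, Matrix.trace_fin_two, Matrix.smul_apply,
      Matrix.cons_val', Matrix.cons_val_zero, Matrix.cons_val_one, Matrix.head_cons,
      Matrix.head_fin_const, Matrix.empty_val', Matrix.cons_val_fin_one,
      smul_eq_mul, Matrix.of_apply]
    field_simp
    ring
  -- key formula
  have key : ∀ N, ∑ i, |(h N).eigenvalues i| = 2 * Real.sqrt (-(A N - B N).det) := by
    intro N
    have hsum : (h N).eigenvalues 0 + (h N).eigenvalues 1 = 0 := by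
      have := trace_eq_sum _ (h N)
      rw [htr N, Fin.sum_univ_two] at this
      linarith
    have hdet : (A N - B N).det = (h N).eigenvalues 0 * (h N).eigenvalues 1 :=
      det_eq_prod _ (h N)
    have h10 : (h N).eigenvalues 1 = -(h N).eigenvalues 0 := by linarith
    rw [Fin.sum_univ_two, h10, abs_neg, ← two_mul]
    congr 1
    rw [hdet, h10]
    rw [show -((h N).eigenvalues 0 * -(h N).eigenvalues 0) = ((h N).eigenvalues 0)^2 by ring]
    exact (Real.sqrt_sq_eq_abs _).symm
  -- determinant limit
  have hdetlim : Tendsto (fun N => (A N - B N).det) atTop (nhds (-1)) := by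
    have hM : Tendsto (fun N => A N - B N) atTop
        (nhds (!![0, 0; 0, 1] - !![1, 0; 0, 0])) := hA.sub hB
    have hc : Continuous fun M : Matrix (Fin 2) (Fin 2) ℝ => M.det :=
      continuous_id.matrix_det
    have hval : (!![0, 0; 0, 1] - !![1, 0; 0, 0] : Matrix (Fin 2) (Fin 2) ℝ).det = -1 := by
      simp [Matrix.det_fin_two]
    have := (hc.tendsto _).comp hM
    rw [hval] at this
    exact this.congr fun N => rfl
  have hT : Tendsto (fun N => ∑ i, |(h N).eigenvalues i|) atTop (nhds 2) := by
    have h1 : Tendsto (fun N => -(A N - B N).det) atTop (nhds 1) := by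
      simpa using hdetlim.neg
    have h2 := (Real.continuous_sqrt.tendsto 1).comp h1
    have h3 := h2.const_mul 2
    simp only [Function.comp, Real.sqrt_one, mul_one] at h3
    refine h3.congr fun N => (key N).symm
  exact ⟨hT, (hT.eventually (eventually_ge_nhds (by norm_num : (1:ℝ) < 2))).exists⟩
end
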